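/- arXiv:math/0503385 — 4 statements merged into one kernel-verified Lean document; each statement's English description precedes it below -/
import Mathlib

section
/- A point p of a Hamiltonian G-space M is a critical point of the function |μ|² if and only if the vector field V(μ*(p)) generated by the Lie algebra element μ*(p) vanishes at p. -/
open RealInnerProductSpace

/-- A point `p` of a Hamiltonian `G`-space `M` is a critical point of `|μ|²`
iff the vector field generated by `μ⋆(p)` vanishes at `p`.  The Hamiltonian space is
modelled on a finite-dimensional vector space `E` with symplectic form `ω`, infinitesimal
action vector fields `V φ`, and moment map identified with `μstar : E → 𝔤` via an
invariant inner product on `𝔤`; the moment map condition is `ω ⨼ Vφ = d(μ·φ)`. -/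
theorem stmt0
    {E 𝔤 : Type*} [NormedAddCommGroup E] [NormedSpace ℝ E]
    [NormedAddCommGroup 𝔤] [InnerProductSpace ℝ 𝔤]
    (ω : E → E →ₗ[ℝ] E →ₗ[ℝ] ℝ)
    (hanti : ∀ p u v, ω p u v = - ω p v u)
    (hnondeg : ∀ p u, (∀ v, ω p u v = 0) → u = 0)
    (V : 𝔤 → E → E)
    (μstar : E → 𝔤)
    (hμdiff : Differentiable ℝ μstar)
    -- moment map condition  ω ⨼ Vφ = d(μ·φ)
    (hmoment : ∀ (p : E) (φ : 𝔤) (v : E),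
      ω p (V φ p) v = fderiv ℝ (fun q => ⟪μstar q, φ⟫) p v)
    (p : E) :
    fderiv ℝ (fun q => ⟪μstar q, μstar q⟫) p = 0 ↔ V (μstar p) p = 0 := by
  have hlin : ∀ v : E, fderiv ℝ (fun q => ⟪μstar q, μstar p⟫) p v
      = ⟪fderiv ℝ μstar p v, μstar p⟫ := by
    intro v
    have h := ((hμdiff p).hasFDerivAt.inner ℝ (hasFDerivAt_const (μstar p) p)).fderiv
    rw [h]; simp [fderivInnerCLM]
  have hsq : ∀ v : E, fderiv ℝ (fun q => ⟪μstar q, μstar q⟫) p v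
      = 2 * ⟪fderiv ℝ μstar p v, μstar p⟫ := by
    intro v
    have h := ((hμdiff p).hasFDerivAt.inner ℝ (hμdiff p).hasFDerivAt).fderiv
    rw [h]; simp [fderivInnerCLM, real_inner_comm]; ring
  have key : ∀ v : E, fderiv ℝ (fun q => ⟪μstar q, μstar q⟫) p v
      = 2 * ω p (V (μstar p) p) v := by
    intro v
    rw [hsq v, hmoment p (μstar p) v, hlin v]
  constructor
  · intro h
    apply hnondeg p
    intro v
    have := key v
    rw [h] at this
    simp at this
    linarith [this]
  · intro h
    ext v
    rw [key v, h]
    simp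
end

section
/- Let x ∈ X satisfy (β + Q_x)x = 0 but βx ≠ 0, where X decomposes as an orthogonal sum of symplectic submodules X_α on which |βy| = β_α|y| with each β_α > 0. Then |Q_x| ≥ min_α β_α. Consequently the set Z = {x : βx = 0, Q_x = 0} is separated from all other solutions of (β+Q_x)x = 0 by the open conditions |Q_x| < (1/3)min_α β_α and |Q_x| > (2/3)min_α β_α. -/
open RealInnerProductSpace

lemma sum_norm_sq_of_orth {X : Type*} [NormedAddCommGroup X] [InnerProductSpace ℝ X]
    {ι : Type*} [Fintype ι] (g : ι → X)
    (h : ∀ i j, i ≠ j → ⟪g i, g j⟫ = 0) :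
    ‖∑ i, g i‖ ^ 2 = ∑ i, ‖g i‖ ^ 2 := by
  have : ⟪∑ i, g i, ∑ j, g j⟫ = ∑ i, ⟪g i, g i⟫ := by
    rw [sum_inner]
    refine Finset.sum_congr rfl fun i _ => ?_
    rw [inner_sum]
    rw [Finset.sum_eq_single i (fun j _ hj => h i j (Ne.symm hj)) (by simp)]
  rw [← real_inner_self_eq_norm_sq, this]
  exact Finset.sum_congr rfl fun i _ => real_inner_self_eq_norm_sq _

/-- If `x ∈ X` satisfies `(β + Q_x)x = 0` but `βx ≠ 0`, where
`X = ⊕_α X_α` is an orthogonal decomposition into submodules preserved by `β` and by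
each operator `Q_y`, on which `‖βy‖ = β_α ‖y‖` with `β_α > 0`, then `‖Q_x‖ ≥ min_α β_α`.
Consequently `Z = {y : βy = 0, Q_y = 0}` is separated from all other solutions of
`(β + Q_y)y = 0` by the conditions `‖Q_y‖ < m/3` and `‖Q_y‖ > 2m/3`, `m = min_α β_α`.
Here `Q : X → (X →L[ℝ] X)` sends `y` to the operator by which the quadratic moment
`Q_y ∈ 𝔥` acts on `X`, and `‖·‖` is the operator norm, with `‖Q_y‖` bounding `|Q_y|`. -/
theorem stmt4
    {X : Type*} [NormedAddCommGroup X] [InnerProductSpace ℝ X] [FiniteDimensional ℝ X]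
    {ι : Type*} [Fintype ι] [Nonempty ι]
    (Vsub : ι → Submodule ℝ X)
    (horth : ∀ (i j : ι), i ≠ j → ∀ y ∈ Vsub i, ∀ z ∈ Vsub j, ⟪y, z⟫ = 0)
    (hspan : (⨆ i, Vsub i) = ⊤)
    (β : X →L[ℝ] X)
    (hβinv : ∀ (i : ι), ∀ y ∈ Vsub i, β y ∈ Vsub i)
    (c : ι → ℝ) (hc : ∀ i, 0 < c i)
    (hβnorm : ∀ (i : ι), ∀ y ∈ Vsub i, ‖β y‖ = c i * ‖y‖)
    (Q : X → (X →L[ℝ] X))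
    (hQinv : ∀ (y : X) (i : ι), ∀ z ∈ Vsub i, Q y z ∈ Vsub i)
    (m : ℝ) (hm : IsGLB (Set.range c) m)
    (x : X) (hx : β x + Q x x = 0) (hβx : β x ≠ 0) :
    m ≤ ‖Q x‖
    ∧ (∀ y : X, β y = 0 → Q y = 0 → ‖Q y‖ < m / 3)
    ∧ (∀ y : X, β y + Q y y = 0 → β y ≠ 0 → 2 * m / 3 < ‖Q y‖) := by
  -- m is attained, hence positive
  have hne : (Set.range c).Nonempty := Set.range_nonempty c
  have hmmem : m ∈ Set.range c := by
    rw [← hm.csInf_eq hne]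
    exact hne.csInf_mem (Set.finite_range c)
  obtain ⟨i₀, hi₀⟩ := hmmem
  have hm0 : 0 < m := hi₀ ▸ hc i₀
  have hmle : ∀ i, m ≤ c i := fun i => hm.1 ⟨i, rfl⟩
  have key : ∀ y : X, β y + Q y y = 0 → β y ≠ 0 → m ≤ ‖Q y‖ := by
    intro y hy hβy
    have hy0 : y ≠ 0 := fun h => hβy (by simp [h])
    -- decompose y
    have hymem : y ∈ ⨆ i, Vsub i := hspan ▸ Submodule.mem_top
    obtain ⟨f, hf, hfsum⟩ := (Submodule.mem_iSup_iff_exists_finsupp Vsub y).mp hymem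
    have hfsum' : ∑ i, f i = y := by
      rw [← hfsum, Finsupp.sum_fintype]
      intro; rfl
    have horthf : ∀ i j, i ≠ j → ⟪f i, f j⟫ = 0 :=
      fun i j hij => horth i j hij _ (hf i) _ (hf j)
    have hny : ‖y‖ ^ 2 = ∑ i, ‖f i‖ ^ 2 := by
      rw [← hfsum']; exact sum_norm_sq_of_orth _ horthf
    have hβsum : β y = ∑ i, β (f i) := by rw [← hfsum', map_sum]
    have hnβ : ‖β y‖ ^ 2 = ∑ i, (c i) ^ 2 * ‖f i‖ ^ 2 := by
      rw [hβsum, sum_norm_sq_of_orth _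
        (fun i j hij => horth i j hij _ (hβinv i _ (hf i)) _ (hβinv j _ (hf j)))]
      exact Finset.sum_congr rfl fun i _ => by rw [hβnorm i _ (hf i)]; ring
    have hsq : (m * ‖y‖) ^ 2 ≤ ‖β y‖ ^ 2 := by
      rw [hnβ, mul_pow, hny, Finset.mul_sum]
      refine Finset.sum_le_sum fun i _ => ?_
      exact mul_le_mul_of_nonneg_right (pow_le_pow_left₀ hm0.le (hmle i) 2) (sq_nonneg _)
    have hmy : m * ‖y‖ ≤ ‖β y‖ := by
      have h1 : 0 ≤ m * ‖y‖ := mul_nonneg hm0.le (norm_nonneg _)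
      nlinarith [norm_nonneg (β y)]
    have hQeq : Q y y = -β y := eq_neg_of_add_eq_zero_right hy
    have hQn : ‖β y‖ ≤ ‖Q y‖ * ‖y‖ := by
      calc ‖β y‖ = ‖Q y y‖ := by rw [hQeq, norm_neg]
      _ ≤ ‖Q y‖ * ‖y‖ := (Q y).le_opNorm y
    have hyn : 0 < ‖y‖ := norm_pos_iff.mpr hy0
    have := le_trans hmy hQn
    exact le_of_mul_le_mul_right (by linarith [mul_comm m ‖y‖, mul_comm ‖Q y‖ ‖y‖]) hyn
  refine ⟨key x hx hβx, fun y _ hQy => ?_, fun y hy hβy => ?_⟩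
  · rw [hQy]; simp; linarith
  · have := key y hy hβy; linarith
end

section
/- For each nonzero ξ ∈ ℝⁿ and each t ≥ 0, the map sending a Schwartz function f on ℝⁿ to ∫₀^t ∫_{ℝⁿ} f(φ) e^{is⟨ξ,φ⟩} dφ ds is a well-defined tempered distribution, and as t → ∞ these distributions converge in the weak-* topology to the tempered distribution f ↦ ∫₀^∞ f̂(sξ) ds. -/
/-!
With Mathlib's normalisation `𝓕 f w = ∫ e^{-2πi⟪φ, w⟫} f(φ) dφ`, the transform of the statement is
`f̂(y) = 𝓕 f (-(2π)⁻¹ • y)`, so the inner integral is `s ↦ 𝓕 f (s • v)` with `v = -(2π)⁻¹ • ξ`.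
Restricting a Schwartz function to the line `ℝ v` with `v ≠ 0` is continuous from `𝓢(ℝⁿ)` to `𝓢(ℝ)`,
and integrating over any set is a continuous functional on `𝓢(ℝ)`; composing them with `𝓕` gives
both distributions. Weak-* convergence is then the convergence of `∫₀ᵗ` to `∫₀^∞` for the function
`s ↦ f̂(sξ)`, which is Schwartz and hence integrable on `(0, ∞)`.
-/

open MeasureTheory RealInnerProductSpace Filter FourierTransform Real

noncomputable section

instance MeasureTheory.Measure.HasTemperateGrowth.restrict {E : Type*} [NormedAddCommGroup E]
    [MeasurableSpace E] (μ : Measure E) [μ.HasTemperateGrowth] (S : Set E) :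
    (μ.restrict S).HasTemperateGrowth :=
  let ⟨k, hk⟩ := HasTemperateGrowth.exists_integrable (μ := μ)
  ⟨⟨k, hk.restrict⟩⟩

theorem MeasureTheory.tendsto_setIntegral_Ioc_atTop {E : Type*} [NormedAddCommGroup E]
    [NormedSpace ℝ E] {μ : Measure ℝ} {g : ℝ → E} {a : ℝ} (hg : IntegrableOn g (Set.Ioi a) μ) :
    Tendsto (fun t => ∫ s in Set.Ioc a t, g s ∂μ) atTop (nhds (∫ s in Set.Ioi a, g s ∂μ)) :=
  (intervalIntegral_tendsto_integral_Ioi a hg tendsto_id).congr' <| by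
    filter_upwards [eventually_ge_atTop a] with t ht using intervalIntegral.integral_of_le ht

theorem antilipschitzWith_smul_right {E : Type*} [NormedAddCommGroup E] [NormedSpace ℝ E]
    {v : E} (hv : v ≠ 0) : AntilipschitzWith ‖v‖₊⁻¹ (fun s : ℝ => s • v) := by
  simp [antilipschitzWith_iff_le_mul_dist, dist_eq_norm, ← sub_smul, norm_smul, field]

namespace SchwartzMap

variable (𝕜 : Type*) [RCLike 𝕜] {E F : Type*} [NormedAddCommGroup E] [NormedSpace ℝ E]
  [NormedAddCommGroup F] [NormedSpace ℝ F] [NormedSpace 𝕜 F]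

def restrictLineCLM {v : E} (hv : v ≠ 0) : 𝓢(E, F) →L[𝕜] 𝓢(ℝ, F) :=
  compCLMOfAntilipschitz 𝕜 (ContinuousLinearMap.toSpanSingleton ℝ v).hasTemperateGrowth
    (antilipschitzWith_smul_right hv)

@[simp]
theorem restrictLineCLM_apply {v : E} (hv : v ≠ 0) (f : 𝓢(E, F)) (s : ℝ) :
    restrictLineCLM 𝕜 hv f s = f (s • v) :=
  rfl

end SchwartzMap

variable {V : Type*} [NormedAddCommGroup V] [InnerProductSpace ℝ V] [FiniteDimensional ℝ V]
  [MeasurableSpace V] [BorelSpace V]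

theorem Real.fourier_neg_inv_two_pi_smul (f : V → ℂ) (y : V) :
    𝓕 f (-(2 * π)⁻¹ • y) = ∫ φ, f φ * Complex.exp (Complex.I * (⟪y, φ⟫ : ℝ)) := by
  rw [Real.fourier_eq']
  congr 1 with φ
  rw [smul_eq_mul, mul_comm, real_inner_smul_right, real_inner_comm]
  congr 2
  push_cast
  field_simp

namespace SchwartzMap

def fourierAlongLineCLM {ξ : V} (hξ : ξ ≠ 0) : 𝓢(V, ℂ) →L[ℂ] 𝓢(ℝ, ℂ) :=
  restrictLineCLM ℂ (smul_ne_zero (by simp [pi_ne_zero]) hξ : -(2 * π)⁻¹ • ξ ≠ 0) ∘L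
    fourierCLM ℂ 𝓢(V, ℂ)

theorem fourierAlongLineCLM_apply {ξ : V} (hξ : ξ ≠ 0) (f : 𝓢(V, ℂ)) (s : ℝ) :
    fourierAlongLineCLM hξ f s = ∫ φ, f φ * Complex.exp (Complex.I * s * (⟪ξ, φ⟫ : ℝ)) := by
  simp only [fourierAlongLineCLM, ContinuousLinearMap.comp_apply, restrictLineCLM_apply,
    fourierCLM_apply, fourier_coe, smul_comm s, Real.fourier_neg_inv_two_pi_smul,
    real_inner_smul_left, Complex.ofReal_mul, mul_assoc]

end SchwartzMap

/-- For each nonzero `ξ ∈ ℝⁿ` and each `t ≥ 0`, the map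
`f ↦ ∫₀^t ∫_{ℝⁿ} f(φ) e^{is⟨ξ,φ⟩} dφ ds` is a well-defined tempered distribution
(a continuous linear functional `T t` on Schwartz space), and as `t → ∞` these converge
in the weak-* topology to the tempered distribution `f ↦ ∫₀^∞ f̂(sξ) ds`, where
`f̂(y) = ∫ f(φ) e^{i⟨y,φ⟩} dφ`. -/
theorem stmt13 {n : ℕ}
    (ξ : EuclideanSpace ℝ (Fin n)) (hξ : ξ ≠ 0) :
    ∃ (T : ℝ → (SchwartzMap (EuclideanSpace ℝ (Fin n)) ℂ →L[ℂ] ℂ))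
      (Tinf : SchwartzMap (EuclideanSpace ℝ (Fin n)) ℂ →L[ℂ] ℂ),
      (∀ t : ℝ, 0 ≤ t → ∀ f,
        T t f = ∫ s in Set.Ioc (0 : ℝ) t,
          ∫ φ, f φ * Complex.exp (Complex.I * s * (⟪ξ, φ⟫ : ℝ)))
      ∧ (∀ f, Tinf f = ∫ s in Set.Ioi (0 : ℝ),
          ∫ φ, f φ * Complex.exp (Complex.I * s * (⟪ξ, φ⟫ : ℝ)))
      ∧ (∀ f, Tendsto (fun t => T t f) atTop (nhds (Tinf f))) := by
  let L := SchwartzMap.fourierAlongLineCLM hξ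
  refine ⟨fun t => SchwartzMap.integralCLM ℂ (volume.restrict (Set.Ioc 0 t)) ∘L L,
    SchwartzMap.integralCLM ℂ (volume.restrict (Set.Ioi 0)) ∘L L, fun t _ f => ?_, fun f => ?_,
    fun f => ?_⟩
  · simp [L, SchwartzMap.fourierAlongLineCLM_apply]
  · simp [L, SchwartzMap.fourierAlongLineCLM_apply]
  · simpa [L, SchwartzMap.fourierAlongLineCLM_apply] using
      tendsto_setIntegral_Ioc_atTop (L f).integrable.integrableOn
end
end

section
/- Let μ : K → ℝⁿ be continuous on a compact set K with |μ(p)|² ≥ s for all p ∈ K, let P(φ) be a function on K × ℝⁿ polynomial in φ with continuous coefficients, and ε > 0. Then |∫_K ∫_{ℝⁿ} P(p,φ) e^{i⟨μ(p),φ⟩ − (ε/2)|φ|²} dφ dm(p)| ≤ Q(ε^{1/2}, ε^{−1/2}) e^{−s/(2ε)} for some polynomial Q with nonnegative coefficients depending on K, m, and P, where m is a finite measure on K. -/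
/-!
The `φ`-integral factorises over the coordinates into one-dimensional moments
`G_k(ε, μ) = ∫ x^k e^{iμx - εx²/2} dx`. For `k = 0` this is the Fourier transform of a Gaussian,
`√(2π/ε) e^{-μ²/(2ε)}`, and integration by parts gives `ε G_{k+1} = iμ G_k + k G_{k-1}`, so by
induction `|G_k| ≤ √(2π) k! ε^{-(k+1)/2} (1 + |μ| ε^{-1/2})^k e^{-μ²/(2ε)}`: the recursion does the
work of completing the square. Over the coordinates the Gaussian factors multiply to
`e^{-|μ|²/(2ε)} ≤ e^{-s/(2ε)}`, and bounding `|μ|` and the coefficients on the compact `K` leaves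
a polynomial in `ε^{-1/2}`.
-/

open MeasureTheory RealInnerProductSpace

open Complex Real Finset

theorem pow_mul_one_add_mul_pow_le {u M : ℝ} (hu : 0 ≤ u) (hM : 0 ≤ M) {a b L : ℕ}
    (h : a + b ≤ L) : u ^ a * (1 + M * u) ^ b ≤ (1 + M) ^ b * (1 + u) ^ L :=
  calc u ^ a * (1 + M * u) ^ b ≤ (1 + u) ^ a * ((1 + M) * (1 + u)) ^ b := by
        gcongr
        · linarith
        · nlinarith
    _ = (1 + M) ^ b * (1 + u) ^ (a + b) := by rw [mul_pow, pow_add]; ring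
    _ ≤ (1 + M) ^ b * (1 + u) ^ L := by gcongr; linarith

theorem one_add_inv_pow_eq_sum_zpow (x : ℝ) (L : ℕ) :
    (1 + x⁻¹) ^ L = ∑ k : Fin (L + 1), (L.choose k : ℝ) * x ^ (-(k : ℤ)) := by
  rw [add_comm, add_pow, ← Fin.sum_univ_eq_sum_range]
  refine sum_congr rfl fun k _ => ?_
  rw [one_pow, mul_one, zpow_neg, zpow_natCast, inv_pow, mul_comm]

noncomputable def modulatedGaussian (ε μ x : ℝ) : ℂ :=
  cexp (I * μ * x - ε / 2 * x ^ 2)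

noncomputable def gaussianMoment (ε μ : ℝ) (k : ℕ) : ℂ :=
  ∫ x : ℝ, (x : ℂ) ^ k * modulatedGaussian ε μ x

section GaussianMoment

open scoped Nat

variable (μ : ℝ)

theorem norm_modulatedGaussian (ε x : ℝ) :
    ‖modulatedGaussian ε μ x‖ = rexp (-(ε / 2) * x ^ 2) := by
  rw [modulatedGaussian, norm_exp]
  congr 1
  simp [← ofReal_pow]

theorem hasDerivAt_modulatedGaussian (ε x : ℝ) :
    HasDerivAt (modulatedGaussian ε μ) ((I * μ - ε * x) * modulatedGaussian ε μ x) x := by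
  have h : HasDerivAt (fun z : ℂ => I * μ * z - ε / 2 * z ^ 2) (I * μ - ε * x) x :=
    (((hasDerivAt_id _).const_mul _).sub ((hasDerivAt_pow 2 _).const_mul _)).congr_deriv
      (by push_cast; ring)
  exact h.cexp.comp_ofReal.congr_deriv (by rw [modulatedGaussian]; ring)

variable {ε : ℝ} (hε : 0 < ε)
include hε

theorem integrable_pow_mul_modulatedGaussian (k : ℕ) :
    Integrable fun x : ℝ => (x : ℂ) ^ k * modulatedGaussian ε μ x := by
  have h := integrable_rpow_mul_exp_neg_mul_sq (half_pos hε) (s := k)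
    (neg_one_lt_zero.trans_le k.cast_nonneg)
  simp only [Real.rpow_natCast] at h
  refine h.mono (by unfold modulatedGaussian; fun_prop) (ae_of_all _ fun x => ?_)
  rw [norm_mul, norm_mul, norm_modulatedGaussian, norm_pow, norm_pow, norm_real,
    Real.norm_of_nonneg (exp_pos _).le]

theorem norm_gaussianMoment_zero :
    ‖gaussianMoment ε μ 0‖ = √(2 * π) * (√ε)⁻¹ * rexp (-μ ^ 2 / (2 * ε)) := by
  have hb : 0 < ((ε / 2 : ℝ) : ℂ).re := by simpa using hε
  have h := fourierIntegral_gaussian hb μ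
  have hw : ∀ x : ℝ,
      modulatedGaussian ε μ x = cexp (I * μ * x) * cexp (-(ε / 2 : ℝ) * x ^ 2) := fun x => by
    rw [modulatedGaussian, ← Complex.exp_add]; push_cast; ring_nf
  simp only [gaussianMoment, pow_zero, one_mul, hw, h]
  have hpi : (π : ℂ) / ((ε / 2 : ℝ) : ℂ) = ((2 * π / ε : ℝ) : ℂ) := by push_cast; field_simp
  have hexp : -(μ : ℂ) ^ 2 / (4 * ((ε / 2 : ℝ) : ℂ)) = ((-μ ^ 2 / (2 * ε) : ℝ) : ℂ) := by
    push_cast; field_simp; ring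
  rw [hpi, hexp, norm_mul, norm_exp_ofReal, norm_cpow_eq_rpow_re_of_pos (by positivity)]
  congr 1
  rw [show (1 / 2 : ℂ).re = 1 / 2 by norm_num, ← Real.sqrt_eq_rpow, Real.sqrt_div' _ hε.le,
    div_eq_mul_inv]

/-- At `k = 0` the truncated `k - 1` is harmless, since that term carries the factor `k`. -/
theorem gaussianMoment_succ (k : ℕ) :
    ε * gaussianMoment ε μ (k + 1) =
      I * μ * gaussianMoment ε μ k + k * gaussianMoment ε μ (k - 1) := by
  have hint := integrable_pow_mul_modulatedGaussian μ hε
  have hderiv : ∀ x : ℝ, HasDerivAt (fun x : ℝ => (x : ℂ) ^ k * modulatedGaussian ε μ x)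
      (k * ((x : ℂ) ^ (k - 1) * modulatedGaussian ε μ x) +
        I * μ * (x ^ k * modulatedGaussian ε μ x) -
        ε * (x ^ (k + 1) * modulatedGaussian ε μ x)) x :=
    fun x => ((hasDerivAt_pow k (x : ℂ)).comp_ofReal.mul
      (hasDerivAt_modulatedGaussian μ ε x)).congr_deriv (by ring)
  have hint₁ := (hint (k - 1)).const_mul (k : ℂ)
  have hint₂ := (hint k).const_mul (I * μ)
  have hint₃ := (hint (k + 1)).const_mul (ε : ℂ)
  have hint₁₂ : Integrable fun x : ℝ => k * ((x : ℂ) ^ (k - 1) * modulatedGaussian ε μ x) +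
      I * μ * (x ^ k * modulatedGaussian ε μ x) := hint₁.add hint₂
  have h := integral_eq_zero_of_hasDerivAt_of_integrable hderiv (hint₁₂.sub hint₃) (hint k)
  rw [integral_sub hint₁₂ hint₃, integral_add hint₁ hint₂, integral_const_mul,
    integral_const_mul, integral_const_mul] at h
  simp only [gaussianMoment]
  linear_combination -h

theorem norm_gaussianMoment_succ_le (k : ℕ) :
    ‖gaussianMoment ε μ (k + 1)‖ ≤
      (√ε)⁻¹ ^ 2 * (|μ| * ‖gaussianMoment ε μ k‖ + k * ‖gaussianMoment ε μ (k - 1)‖) := by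
  have h : gaussianMoment ε μ (k + 1) =
      (ε : ℂ)⁻¹ * (I * μ * gaussianMoment ε μ k + k * gaussianMoment ε μ (k - 1)) := by
    rw [← gaussianMoment_succ μ hε, inv_mul_cancel_left₀ (ofReal_ne_zero.mpr hε.ne')]
  rw [h, norm_mul, inv_pow, Real.sq_sqrt hε.le, norm_inv, norm_real, Real.norm_of_nonneg hε.le]
  gcongr
  refine (norm_add_le _ _).trans_eq ?_
  simp

theorem norm_gaussianMoment_le (k : ℕ) :
    ‖gaussianMoment ε μ k‖ ≤ √(2 * π) * k ! * (√ε)⁻¹ ^ (k + 1) *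
      (1 + |μ| * (√ε)⁻¹) ^ k * rexp (-μ ^ 2 / (2 * ε)) := by
  set u := (√ε)⁻¹
  set P := 1 + |μ| * u
  set E := rexp (-μ ^ 2 / (2 * ε))
  have hμu : |μ| * u ≤ P := le_add_of_nonneg_left zero_le_one
  have hP : 1 ≤ P := le_add_of_nonneg_right (by positivity)
  have hrec := norm_gaussianMoment_succ_le μ hε
  induction k using Nat.twoStepInduction with
  | zero => simp [norm_gaussianMoment_zero μ hε, u, E]
  | one =>
    calc ‖gaussianMoment ε μ 1‖ ≤ u ^ 2 * (|μ| * ‖gaussianMoment ε μ 0‖) := by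
          simpa only [Nat.cast_zero, zero_mul, add_zero] using hrec 0
      _ = √(2 * π) * u ^ 2 * (|μ| * u) * E := by rw [norm_gaussianMoment_zero μ hε]; ring
      _ ≤ √(2 * π) * u ^ 2 * P * E := by gcongr
      _ = _ := by simp
  | more k ih₀ ih₁ =>
    calc ‖gaussianMoment ε μ (k + 2)‖
        ≤ u ^ 2 * (|μ| * ‖gaussianMoment ε μ (k + 1)‖ + (k + 1) * ‖gaussianMoment ε μ k‖) := by
          simpa only [Nat.cast_add, Nat.cast_one, Nat.add_sub_cancel] using hrec (k + 1)
      _ ≤ u ^ 2 * (|μ| * (√(2 * π) * (k + 1)! * u ^ (k + 2) * P ^ (k + 1) * E) +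
            (k + 1) * (√(2 * π) * k ! * u ^ (k + 1) * P ^ k * E)) := by gcongr
      _ = √(2 * π) * (k + 1)! * u ^ (k + 3) * E * (|μ| * u * P ^ (k + 1) + P ^ k) := by
          rw [Nat.factorial_succ]; push_cast; ring
      _ ≤ √(2 * π) * (k + 1)! * u ^ (k + 3) * E * (P * P ^ (k + 1) + P ^ (k + 2)) := by
          gcongr
          omega
      _ = √(2 * π) * (2 * (k + 1)!) * u ^ (k + 3) * P ^ (k + 2) * E := by ring
      _ ≤ √(2 * π) * (k + 2)! * u ^ (k + 3) * P ^ (k + 2) * E := by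
          gcongr
          rw [Nat.factorial_succ (k + 1)]
          push_cast
          nlinarith [(k + 1).factorial_pos]

end GaussianMoment

noncomputable def gaussianMomentConst {ι : Type*} [Fintype ι] (e : ι → ℕ) : ℝ :=
  ∏ i, √(2 * π) * (e i).factorial

theorem gaussianMomentConst_nonneg {ι : Type*} [Fintype ι] (e : ι → ℕ) :
    0 ≤ gaussianMomentConst e :=
  prod_nonneg fun _ _ => by positivity

section EuclideanSpace

variable {ι : Type*} [Fintype ι]

theorem cexp_inner_sub_norm_sq_eq_prod (ε : ℝ) (ν φ : EuclideanSpace ℝ ι) :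
    cexp (I * (⟪ν, φ⟫ : ℝ) - (ε / 2) * (‖φ‖ ^ 2 : ℝ)) = ∏ i, modulatedGaussian ε (ν i) (φ i) := by
  simp only [modulatedGaussian, ← Complex.exp_sum, EuclideanSpace.real_norm_sq_eq,
    PiLp.inner_apply, RCLike.inner_apply, conj_trivial]
  push_cast
  rw [mul_sum, mul_sum, ← sum_sub_distrib]
  exact congrArg cexp (sum_congr rfl fun i _ => by ring)

theorem monomial_mul_cexp_eq_prod (ε : ℝ) (e : ι → ℕ) (ν φ : EuclideanSpace ℝ ι) :
    (∏ i, (φ i : ℂ) ^ e i) * cexp (I * (⟪ν, φ⟫ : ℝ) - (ε / 2) * (‖φ‖ ^ 2 : ℝ)) =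
      ∏ i, (φ i : ℂ) ^ e i * modulatedGaussian ε (ν i) (φ i) := by
  rw [cexp_inner_sub_norm_sq_eq_prod, prod_mul_distrib]

theorem integral_monomial_mul_cexp (ε : ℝ) (e : ι → ℕ) (ν : EuclideanSpace ℝ ι) :
    ∫ φ : EuclideanSpace ℝ ι,
      (∏ i, (φ i : ℂ) ^ e i) * cexp (I * (⟪ν, φ⟫ : ℝ) - (ε / 2) * (‖φ‖ ^ 2 : ℝ)) =
      ∏ i, gaussianMoment ε (ν i) (e i) := by
  simp_rw [monomial_mul_cexp_eq_prod]
  rw [← (PiLp.volume_preserving_toLp ι).integral_comp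
    (MeasurableEquiv.toLp 2 (ι → ℝ)).measurableEmbedding]
  exact integral_fintype_prod_volume_eq_prod
    (fun i (x : ℝ) => (x : ℂ) ^ e i * modulatedGaussian ε (ν i) x)

variable {ε : ℝ} (hε : 0 < ε)
include hε

theorem integrable_monomial_mul_cexp (e : ι → ℕ) (ν : EuclideanSpace ℝ ι) :
    Integrable fun φ : EuclideanSpace ℝ ι =>
      (∏ i, (φ i : ℂ) ^ e i) * cexp (I * (⟪ν, φ⟫ : ℝ) - (ε / 2) * (‖φ‖ ^ 2 : ℝ)) := by
  simp_rw [monomial_mul_cexp_eq_prod]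
  rw [← (PiLp.volume_preserving_toLp ι).integrable_comp_emb
    (MeasurableEquiv.toLp 2 (ι → ℝ)).measurableEmbedding]
  exact Integrable.fintype_prod
    (f := fun i (x : ℝ) => (x : ℂ) ^ e i * modulatedGaussian ε (ν i) x)
    fun i => integrable_pow_mul_modulatedGaussian (ν i) hε (e i)

theorem norm_integral_monomial_mul_cexp_le (e : ι → ℕ) (ν : EuclideanSpace ℝ ι) :
    ‖∫ φ : EuclideanSpace ℝ ι,
        (∏ i, (φ i : ℂ) ^ e i) * cexp (I * (⟪ν, φ⟫ : ℝ) - (ε / 2) * (‖φ‖ ^ 2 : ℝ))‖ ≤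
      gaussianMomentConst e * (√ε)⁻¹ ^ (Fintype.card ι + ∑ i, e i) *
        (1 + ‖ν‖ * (√ε)⁻¹) ^ (∑ i, e i) * rexp (-‖ν‖ ^ 2 / (2 * ε)) := by
  set u := (√ε)⁻¹
  rw [integral_monomial_mul_cexp, norm_prod]
  calc ∏ i, ‖gaussianMoment ε (ν i) (e i)‖
      ≤ ∏ i, √(2 * π) * (e i).factorial * u ^ (e i + 1) * (1 + ‖ν‖ * u) ^ e i *
          rexp (-ν i ^ 2 / (2 * ε)) := by
        refine prod_le_prod (fun i _ => norm_nonneg _) fun i _ =>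
          (norm_gaussianMoment_le (ν i) hε (e i)).trans ?_
        have : |ν i| ≤ ‖ν‖ := PiLp.norm_apply_le ν i
        gcongr
    _ = _ := by
        simp only [prod_mul_distrib, prod_pow_eq_pow_sum, ← Real.exp_sum, gaussianMomentConst]
        rw [← sum_div, sum_neg_distrib, ← EuclideanSpace.real_norm_sq_eq, sum_add_distrib,
          sum_const, card_univ, smul_eq_mul, mul_one, add_comm (∑ i, e i)]

theorem norm_integral_monomial_mul_cexp_le_of_norm_le (e : ι → ℕ) {ν : EuclideanSpace ℝ ι}
    {M s : ℝ} (hν : ‖ν‖ ≤ M) (hs : s ≤ ‖ν‖ ^ 2) {L : ℕ}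
    (hL : Fintype.card ι + 2 * ∑ i, e i ≤ L) :
    ‖∫ φ : EuclideanSpace ℝ ι,
        (∏ i, (φ i : ℂ) ^ e i) * cexp (I * (⟪ν, φ⟫ : ℝ) - (ε / 2) * (‖φ‖ ^ 2 : ℝ))‖ ≤
      gaussianMomentConst e * (1 + M) ^ (∑ i, e i) * (1 + (√ε)⁻¹) ^ L * rexp (-s / (2 * ε)) := by
  have hM : 0 ≤ M := (norm_nonneg ν).trans hν
  have hpow : (√ε)⁻¹ ^ (Fintype.card ι + ∑ i, e i) * (1 + ‖ν‖ * (√ε)⁻¹) ^ (∑ i, e i) ≤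
      (1 + M) ^ (∑ i, e i) * (1 + (√ε)⁻¹) ^ L :=
    (pow_mul_one_add_mul_pow_le (by positivity) hM
      (show Fintype.card ι + ∑ i, e i + ∑ i, e i ≤ L by omega)).trans' (by gcongr)
  calc _ ≤ _ := norm_integral_monomial_mul_cexp_le hε e ν
    _ = gaussianMomentConst e * ((√ε)⁻¹ ^ (Fintype.card ι + ∑ i, e i) *
          (1 + ‖ν‖ * (√ε)⁻¹) ^ (∑ i, e i) * rexp (-‖ν‖ ^ 2 / (2 * ε))) := by ring
    _ ≤ gaussianMomentConst e * ((1 + M) ^ (∑ i, e i) * (1 + (√ε)⁻¹) ^ L *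
          rexp (-s / (2 * ε))) := by
        have := gaussianMomentConst_nonneg e
        gcongr
    _ = _ := by ring

theorem norm_integral_polynomial_mul_cexp_le {κ : Type*} [Fintype κ] (a : κ → ℂ)
    (e : κ → ι → ℕ) {ν : EuclideanSpace ℝ ι} {M s : ℝ} (hν : ‖ν‖ ≤ M) (hs : s ≤ ‖ν‖ ^ 2) :
    ‖∫ φ : EuclideanSpace ℝ ι, (∑ j, a j * ∏ i, (φ i : ℂ) ^ e j i) *
        cexp (I * (⟪ν, φ⟫ : ℝ) - (ε / 2) * (‖φ‖ ^ 2 : ℝ))‖ ≤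
      (∑ j, ‖a j‖) * (∑ j, gaussianMomentConst (e j) * (1 + M) ^ ∑ i, e j i) *
        (1 + (√ε)⁻¹) ^ (Fintype.card ι + 2 * ∑ j, ∑ i, e j i) * rexp (-s / (2 * ε)) := by
  simp only [sum_mul, mul_assoc (a _)]
  rw [integral_finsetSum _ fun j _ => (integrable_monomial_mul_cexp hε (e j) ν).const_mul (a j)]
  refine (norm_sum_le _ _).trans (sum_le_sum fun j _ => ?_)
  have hM : 0 ≤ M := (norm_nonneg ν).trans hν
  have hdeg : Fintype.card ι + 2 * ∑ i, e j i ≤ Fintype.card ι + 2 * ∑ j, ∑ i, e j i := by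
    have := single_le_sum (f := fun j => ∑ i, e j i) (fun _ _ => Nat.zero_le _) (mem_univ j)
    omega
  have hj : gaussianMomentConst (e j) * (1 + M) ^ ∑ i, e j i ≤
      ∑ j, gaussianMomentConst (e j) * (1 + M) ^ ∑ i, e j i :=
    single_le_sum (f := fun j => gaussianMomentConst (e j) * (1 + M) ^ ∑ i, e j i)
      (fun j _ => mul_nonneg (gaussianMomentConst_nonneg (e j))
        (pow_nonneg (by linarith) _)) (mem_univ j)
  rw [integral_const_mul, norm_mul, mul_assoc, mul_assoc]
  gcongr ‖a j‖ * ?_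
  refine (norm_integral_monomial_mul_cexp_le_of_norm_le hε (e j) hν hs hdeg).trans ?_
  rw [← mul_assoc]
  gcongr

end EuclideanSpace

/-- Let `μ : K → ℝⁿ` be continuous on a compact set `K` with `|μ(p)|² ≥ s`
for all `p ∈ K`, let `P(p,φ)` be polynomial in `φ` with continuous coefficients
(`P(p,φ) = ∑_j c_j(p) φ^{e_j}`), let `m` be a finite measure on `K`, and let `ε > 0`.
Then `|∫_K ∫_{ℝⁿ} P(p,φ) e^{i⟨μ(p),φ⟩ − (ε/2)|φ|²} dφ dm(p)|` is bounded by
`Q(ε^{1/2}, ε^{−1/2}) e^{−s/(2ε)}` for a Laurent polynomial `Q` in `√ε` with nonnegative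
coefficients depending only on `K`, `m`, and `P`. -/
theorem stmt14 {n : ℕ}
    {K : Type*} [TopologicalSpace K] [CompactSpace K] [MeasurableSpace K] [BorelSpace K]
    (m : Measure K) [IsFiniteMeasure m]
    (μ : K → EuclideanSpace ℝ (Fin n)) (hμ : Continuous μ)
    (s : ℝ) (hs : ∀ p, s ≤ ‖μ p‖ ^ 2)
    (d : ℕ) (c : Fin d → K → ℂ) (hc : ∀ j, Continuous (c j))
    (e : Fin d → Fin n → ℕ) :
    ∃ (N : ℕ) (a : Fin N → ℝ) (k : Fin N → ℤ),
      (∀ j, 0 ≤ a j) ∧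
      ∀ ε : ℝ, 0 < ε →
        ‖∫ p, (∫ φ : EuclideanSpace ℝ (Fin n),
            (∑ j, c j p * ∏ i, ((φ i : ℂ)) ^ (e j i))
              * Complex.exp (Complex.I * (⟪μ p, φ⟫ : ℝ) - (ε / 2) * (‖φ‖ ^ 2 : ℝ)))
          ∂m‖
        ≤ (∑ j, a j * (Real.sqrt ε) ^ (k j)) * Real.exp (-s / (2 * ε)) := by
  let μc : C(K, EuclideanSpace ℝ (Fin n)) := ⟨μ, hμ⟩
  let cc : C(K, ℝ) := ⟨fun p => ∑ j, ‖c j p‖, by fun_prop⟩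
  set C := ∑ j, gaussianMomentConst (e j) * (1 + ‖μc‖) ^ ∑ i, e j i
  set L := n + 2 * ∑ j, ∑ i, e j i
  have hC : 0 ≤ C := sum_nonneg fun j _ => mul_nonneg (gaussianMomentConst_nonneg _) (by positivity)
  refine ⟨L + 1, fun k => m.real Set.univ * ‖cc‖ * C * L.choose k, fun k => -k,
    fun k => by positivity, fun ε hε => ?_⟩
  have hpoint : ∀ p, ‖∫ φ : EuclideanSpace ℝ (Fin n), (∑ j, c j p * ∏ i, (φ i : ℂ) ^ e j i) *
      cexp (I * (⟪μ p, φ⟫ : ℝ) - (ε / 2) * (‖φ‖ ^ 2 : ℝ))‖ ≤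
      ‖cc‖ * C * (1 + (√ε)⁻¹) ^ L * rexp (-s / (2 * ε)) := fun p => by
    refine (norm_integral_polynomial_mul_cexp_le hε (c · p) e (μc.norm_coe_le_norm p)
      (hs p)).trans ?_
    have hcp : ∑ j, ‖c j p‖ ≤ ‖cc‖ := (le_abs_self _).trans (cc.norm_coe_le_norm p)
    rw [Fintype.card_fin]
    gcongr
  calc _ ≤ ‖cc‖ * C * (1 + (√ε)⁻¹) ^ L * rexp (-s / (2 * ε)) * m.real Set.univ :=
        norm_integral_le_of_norm_le_const (ae_of_all _ hpoint)
    _ = _ := by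
        clear_value C
        simp only [one_add_inv_pow_eq_sum_zpow, mul_sum, sum_mul]
        exact sum_congr rfl fun k _ => by ring
end
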